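/- arXiv:2007.08627 — 4 statements merged into one kernel-verified Lean document; each statement's English description precedes it below -/
import Mathlib

section
/- For integers h ≥ 2 and n ≥ 7h², the signless Laplacian spectral radius of S_{n,h} satisfies q(S_{n,h}) > n + 2h − 2 − 2(h²−h)/(n+2h−3) > n + 2h − 3. -/
open scoped Classical

/-- The signless Laplacian matrix `Q(G) = D(G) + A(G)` of a graph. -/
noncomputable def Qmat {V : Type*} [Fintype V] [DecidableEq V] (G : SimpleGraph V) :
    Matrix V V ℝ :=
  Matrix.diagonal (fun v => (G.degree v : ℝ)) + G.adjMatrix ℝ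

/-- The signless Laplacian spectral radius `q(G)`: the largest eigenvalue of `Q(G)`. -/
noncomputable def qspec {V : Type*} [Fintype V] [DecidableEq V] (G : SimpleGraph V) : ℝ :=
  sSup (spectrum ℝ (Qmat G))

/-- The number of edges `e(G)`. -/
noncomputable def ecount {V : Type*} (G : SimpleGraph V) : ℕ := G.edgeSet.ncard

/-- `Contains G H` : `G` contains a copy of `H` as a (not necessarily induced) subgraph. -/
def Contains {V W : Type*} (G : SimpleGraph V) (H : SimpleGraph W) : Prop :=
  ∃ f : W → V, Function.Injective f ∧ ∀ a b, H.Adj a b → G.Adj (f a) (f b)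

/-- `k` vertex-disjoint copies of the path `P₃` on three vertices. -/
def kP3 (k : ℕ) : SimpleGraph (Fin k × Fin 3) where
  Adj x y := x.1 = y.1 ∧ (x.2.val + 1 = y.2.val ∨ y.2.val + 1 = x.2.val)
  symm := ⟨fun x y h => ⟨h.1.symm, h.2.symm⟩⟩
  loopless := ⟨fun x h => by omega⟩

/-- The linear forest `P_{a 0} ∪ P_{a 1} ∪ ⋯ ∪ P_{a (k-1)}`. -/
def linearForest (k : ℕ) (a : Fin k → ℕ) : SimpleGraph (Σ i : Fin k, Fin (a i)) where
  Adj x y := x.1 = y.1 ∧ (x.2.val + 1 = y.2.val ∨ y.2.val + 1 = x.2.val)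
  symm := ⟨fun x y h => ⟨h.1.symm, h.2.symm⟩⟩
  loopless := ⟨fun x h => by omega⟩

/-- `S_{n,h} = K_h ∇ complement (K_{n-h})`, the join of a clique on `h` vertices
with an independent set on `n - h` vertices. -/
def Snh (n h : ℕ) : SimpleGraph (Fin n) where
  Adj u v := u ≠ v ∧ (u.val < h ∨ v.val < h)
  symm := ⟨fun u v h => ⟨h.1.symm, h.2.symm⟩⟩
  loopless := ⟨fun u h => h.1 rfl⟩

/-- `S⁺_{n,h}` : `S_{n,h}` with one extra edge (between vertices `h` and `h+1`)
inside the independent part. -/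
def Spnh (n h : ℕ) : SimpleGraph (Fin n) where
  Adj u v := u ≠ v ∧ (u.val < h ∨ v.val < h ∨
    (u.val = h ∧ v.val = h + 1) ∨ (u.val = h + 1 ∧ v.val = h))
  symm := ⟨fun u v h => ⟨h.1.symm, by tauto⟩⟩
  loopless := ⟨fun u h => h.1 rfl⟩

/-- `N₆` : the graph obtained from the triangle `{0,1,2}` by attaching pendant
vertices `3,4,5` to `0,1,2` respectively. -/
def N6 : SimpleGraph (Fin 6) where
  Adj u v := u ≠ v ∧ ((u.val < 3 ∧ v.val < 3) ∨ v.val = u.val + 3 ∨ u.val = v.val + 3)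
  symm := ⟨fun u v h => ⟨h.1.symm, by tauto⟩⟩
  loopless := ⟨fun u h => by omega⟩

/-- `F_{n,k}(H) = K_{k-1} ∇ (H ∪ p·K₂ ∪ K_s)` for a graph `H` on `h` vertices,
where `n - (k + h - 1) = 2p + s`, `0 ≤ s < 2`.  Vertices `0,…,k-2` form the
dominating clique, `H` is placed on vertices `k-1,…,k-2+h`, and the remaining
vertices form a matching (plus one isolated vertex when `s = 1`). -/
def FnkH (n k h : ℕ) (H : SimpleGraph (Fin h)) : SimpleGraph (Fin n) where
  Adj u v := u ≠ v ∧ (u.val < k - 1 ∨ v.val < k - 1 ∨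
    (∃ (hu : u.val - (k - 1) < h) (hv : v.val - (k - 1) < h),
      k - 1 ≤ u.val ∧ k - 1 ≤ v.val ∧
        H.Adj ⟨u.val - (k - 1), hu⟩ ⟨v.val - (k - 1), hv⟩) ∨
    (k - 1 + h ≤ u.val ∧ (u.val - (k - 1 + h)) % 2 = 0 ∧ v.val = u.val + 1) ∨
    (k - 1 + h ≤ v.val ∧ (v.val - (k - 1 + h)) % 2 = 0 ∧ u.val = v.val + 1))
  symm := by
    constructor
    rintro u v ⟨hne, h⟩
    refine ⟨hne.symm, ?_⟩
    rcases h with h | h | ⟨hu, hv, h1, h2, h3⟩ | h | h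
    · tauto
    · tauto
    · exact Or.inr (Or.inr (Or.inl ⟨hv, hu, h2, h1, h3.symm⟩))
    · tauto
    · tauto
  loopless := by
    constructor
    rintro u ⟨hne, _⟩
    exact hne rfl

/-- `F_{n,k} = F_{n,k}(K₂) = K_{k-1} ∇ (p·K₂ ∪ K_s)`. -/
def Fnk (n k : ℕ) : SimpleGraph (Fin n) := FnkH n k 2 ⊤

/-- `H_{n,1}` : obtained from `S_{n-2,2}` (on vertices `0,…,n-3`, with dominating
vertices `0,1`) and a triangle `{0, n-2, n-1}`, identifying the max-degree vertex
`0` of `S_{n-2,2}` with a vertex of `K₃`. -/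
def Hn1 (n : ℕ) : SimpleGraph (Fin n) where
  Adj u v := u ≠ v ∧ ((u.val < n - 2 ∧ v.val < n - 2 ∧ (u.val < 2 ∨ v.val < 2)) ∨
    ((u.val = 0 ∨ n - 2 ≤ u.val) ∧ (v.val = 0 ∨ n - 2 ≤ v.val)))
  symm := ⟨fun u v h => ⟨h.1.symm, by tauto⟩⟩
  loopless := ⟨fun u h => h.1 rfl⟩

/-- `L_{t,h} = K₁ ∇ (t·K_h)` : one vertex joined to `t` disjoint copies of `K_h`. -/
def Lth (t h : ℕ) : SimpleGraph (Fin (t * h + 1)) where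
  Adj u v := u ≠ v ∧ (u.val = 0 ∨ v.val = 0 ∨ (u.val - 1) / h = (v.val - 1) / h)
  symm := ⟨fun u v h => ⟨h.1.symm, by tauto⟩⟩
  loopless := ⟨fun u h => h.1 rfl⟩

/-- `L_{t₁,t₂,h,h+1} = K₁ ∇ (t₁·K_h ∪ t₂·K_{h+1})`. -/
def Lt1t2 (t1 t2 h : ℕ) : SimpleGraph (Fin (t1 * h + t2 * (h + 1) + 1)) where
  Adj u v := u ≠ v ∧ (u.val = 0 ∨ v.val = 0 ∨
    (u.val ≤ t1 * h ∧ v.val ≤ t1 * h ∧ (u.val - 1) / h = (v.val - 1) / h) ∨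
    (t1 * h < u.val ∧ t1 * h < v.val ∧
      (u.val - 1 - t1 * h) / (h + 1) = (v.val - 1 - t1 * h) / (h + 1)))
  symm := ⟨fun u v h => ⟨h.1.symm, by tauto⟩⟩
  loopless := ⟨fun u h => h.1 rfl⟩

open Matrix in
private lemma snh_nbr_lt' {n h : ℕ} {v : Fin n} (hv : v.val < h) :
    (Snh n h).neighborFinset v = Finset.univ.erase v := by
  ext u
  rw [SimpleGraph.mem_neighborFinset]
  simp [SimpleGraph.mem_neighborFinset, Snh, eq_comm, hv]

private lemma snh_nbr_ge' {n h : ℕ} {v : Fin n} (hv : h ≤ v.val) :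
    (Snh n h).neighborFinset v = Finset.univ.filter (fun u : Fin n => u.val < h) := by
  ext u
  rw [SimpleGraph.mem_neighborFinset]
  simp only [SimpleGraph.mem_neighborFinset, Snh, Finset.mem_filter, Finset.mem_univ, true_and]
  constructor
  · rintro ⟨hne, hlt | hlt⟩
    · omega
    · exact hlt
  · intro hu
    exact ⟨by intro e; subst e; omega, Or.inr hu⟩

private lemma snh_filter_lt_card' {n h : ℕ} (hle : h ≤ n) :
    (Finset.univ.filter (fun u : Fin n => u.val < h)).card = h := by
  have : (Finset.univ.filter (fun u : Fin n => u.val < h))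
      = Finset.map (Fin.castLEEmb hle) Finset.univ := by
    ext u
    simp only [Finset.mem_filter, Finset.mem_univ, true_and, Finset.mem_map]
    constructor
    · intro hu; exact ⟨⟨u.val, hu⟩, by simp [Fin.castLEEmb, Fin.ext_iff]⟩
    · rintro ⟨j, -, rfl⟩; simpa using j.isLt
  rw [this, Finset.card_map, Finset.card_univ, Fintype.card_fin]

private lemma snh_degree_lt' {n h : ℕ} {v : Fin n} (hv : v.val < h) :
    (Snh n h).degree v = n - 1 := by
  rw [← SimpleGraph.card_neighborFinset_eq_degree, snh_nbr_lt' hv,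
    Finset.card_erase_of_mem (Finset.mem_univ v), Finset.card_univ, Fintype.card_fin]

private lemma snh_degree_ge' {n h : ℕ} {v : Fin n} (hv : h ≤ v.val) (hle : h ≤ n) :
    (Snh n h).degree v = h := by
  rw [← SimpleGraph.card_neighborFinset_eq_degree, snh_nbr_ge' hv, snh_filter_lt_card' hle]

open Matrix in
private lemma snh_eigen' (n h : ℕ) (lam : ℝ) (hhn : h < n)
    (hq : lam ^ 2 - ((n : ℝ) + 2 * h - 2) * lam + (2 * (h : ℝ) ^ 2 - 2 * h) = 0) :
    Qmat (Snh n h) *ᵥ (fun v : Fin n => if v.val < h then lam - h else (h : ℝ))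
      = lam • (fun v : Fin n => if v.val < h then lam - h else (h : ℝ)) := by
  set x : Fin n → ℝ := fun v => if v.val < h then lam - h else (h : ℝ) with hx
  have hle : h ≤ n := hhn.le
  have hS1 : ∑ u ∈ Finset.univ.filter (fun u : Fin n => u.val < h), x u = h * (lam - h) := by
    rw [Finset.sum_congr rfl (fun u hu => by
      simp only [hx]; rw [if_pos (Finset.mem_filter.mp hu).2])]
    rw [Finset.sum_const, snh_filter_lt_card' hle, nsmul_eq_mul]
  have hS2 : ∑ u ∈ Finset.univ.filter (fun u : Fin n => ¬ u.val < h), x u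
      = ((n : ℝ) - h) * h := by
    rw [Finset.sum_congr rfl (fun u hu => by
      simp only [hx]; rw [if_neg (Finset.mem_filter.mp hu).2])]
    rw [Finset.sum_const, nsmul_eq_mul]
    have hcard : (Finset.univ.filter (fun u : Fin n => ¬ u.val < h)).card = n - h := by
      have := Finset.card_filter_add_card_filter_not
        (s := (Finset.univ : Finset (Fin n))) (p := fun u : Fin n => u.val < h)
      rw [snh_filter_lt_card' hle, Finset.card_univ, Fintype.card_fin] at this
      omega
    rw [hcard]
    push_cast [hle]
    ring
  have htot : ∑ u : Fin n, x u = h * (lam - h) + ((n : ℝ) - h) * h := by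
    rw [← Finset.sum_filter_add_sum_filter_not Finset.univ (fun u : Fin n => u.val < h)]
    rw [hS1, hS2]
  funext v
  have hmv : (Qmat (Snh n h) *ᵥ x) v
      = ((Snh n h).degree v : ℝ) * x v + ∑ u ∈ (Snh n h).neighborFinset v, x u := by
    simp [Qmat, Matrix.add_mulVec, Matrix.mulVec_diagonal,
      SimpleGraph.adjMatrix_mulVec_apply]
  rw [hmv]
  by_cases hv : v.val < h
  · have hdeg : ((Snh n h).degree v : ℝ) = (n : ℝ) - 1 := by
      rw [snh_degree_lt' hv]; push_cast [show 1 ≤ n by omega]; ring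
    have hsum : ∑ u ∈ (Snh n h).neighborFinset v, x u
        = (h * (lam - h) + ((n : ℝ) - h) * h) - (lam - h) := by
      rw [snh_nbr_lt' hv, Finset.sum_erase_eq_sub (Finset.mem_univ v), htot]
      simp [hx, hv]
    rw [hdeg, hsum]
    simp only [Pi.smul_apply, smul_eq_mul, hx, if_pos hv]
    nlinarith [hq]
  · have hdeg : ((Snh n h).degree v : ℝ) = (h : ℝ) := by
      rw [snh_degree_ge' (by omega) hle]
    have hsum : ∑ u ∈ (Snh n h).neighborFinset v, x u = h * (lam - h) := by
      rw [snh_nbr_ge' (by omega)]; exact hS1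
    rw [hdeg, hsum]
    simp only [Pi.smul_apply, smul_eq_mul, hx, if_neg hv]
    ring

private lemma qmat_isHermitian' {V : Type*} [Fintype V] [DecidableEq V] (G : SimpleGraph V) :
    (Qmat G).IsHermitian :=
  (Matrix.isHermitian_diagonal _).add
    (by
      unfold Matrix.IsHermitian
      ext i j
      simp [Matrix.conjTranspose_apply, SimpleGraph.adjMatrix_apply, G.adj_comm i j])

open Matrix in
private lemma mem_spectrum_of_eigen' {V : Type*} [Fintype V] [DecidableEq V]
    (G : SimpleGraph V) (lam : ℝ) (x : V → ℝ) (hx : x ≠ 0)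
    (heig : Qmat G *ᵥ x = lam • x) : lam ∈ spectrum ℝ (Qmat G) := by
  rw [spectrum.mem_iff]
  rw [Matrix.isUnit_iff_isUnit_det, isUnit_iff_ne_zero, not_not]
  rw [← Matrix.exists_mulVec_eq_zero_iff]
  refine ⟨x, hx, ?_⟩
  have halg : (algebraMap ℝ (Matrix V V ℝ)) lam = lam • (1 : Matrix V V ℝ) := by
    simp [Algebra.algebraMap_eq_smul_one]
  rw [Matrix.sub_mulVec, halg, Matrix.smul_mulVec, Matrix.one_mulVec, heig, sub_self]

private lemma le_qspec' {V : Type*} [Fintype V] [DecidableEq V]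
    (G : SimpleGraph V) (lam : ℝ) (hm : lam ∈ spectrum ℝ (Qmat G)) : lam ≤ qspec G := by
  refine le_csSup ?_ hm
  rw [Matrix.IsHermitian.spectrum_real_eq_range_eigenvalues (qmat_isHermitian' G)]
  exact (Set.finite_range _).bddAbove

/-- lower bounds for `q(S_{n,h})`. -/
theorem stmt_5 (h n : ℕ) (hh : 2 ≤ h) (hn : 7 * h ^ 2 ≤ n) :
    (n : ℝ) + 2 * h - 2 - 2 * ((h : ℝ) ^ 2 - (h : ℝ)) / ((n : ℝ) + 2 * h - 3)
        < qspec (Snh n h) ∧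
    (n : ℝ) + 2 * h - 3
        < (n : ℝ) + 2 * h - 2 - 2 * ((h : ℝ) ^ 2 - (h : ℝ)) / ((n : ℝ) + 2 * h - 3) := by
  have hh2 : (2 : ℝ) ≤ (h : ℝ) := by exact_mod_cast hh
  have hn7 : (7 : ℝ) * (h : ℝ) ^ 2 ≤ (n : ℝ) := by exact_mod_cast hn
  set N : ℝ := (n : ℝ) with hN
  set H : ℝ := (h : ℝ) with hH
  have hm : (0 : ℝ) < N + 2 * H - 3 := by nlinarith
  have hc : (0 : ℝ) < 2 * H ^ 2 - 2 * H := by nlinarith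
  have hcm : 2 * H ^ 2 - 2 * H < N + 2 * H - 3 := by nlinarith
  have part2 : N + 2 * H - 3
      < N + 2 * H - 2 - 2 * (H ^ 2 - H) / (N + 2 * H - 3) := by
    have hlt : 2 * (H ^ 2 - H) / (N + 2 * H - 3) < 1 := by
      rw [div_lt_one hm]; nlinarith
    linarith
  refine ⟨?_, part2⟩
  -- the largest root of  x² - (N+2H-2)x + (2H²-2H) = 0
  have hD : (0 : ℝ) ≤ (N + 2 * H - 2) ^ 2 - 4 * (2 * H ^ 2 - 2 * H) := by nlinarith
  set r : ℝ := Real.sqrt ((N + 2 * H - 2) ^ 2 - 4 * (2 * H ^ 2 - 2 * H)) with hrdef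
  have hr0 : 0 ≤ r := Real.sqrt_nonneg _
  have hr2 : r ^ 2 = (N + 2 * H - 2) ^ 2 - 4 * (2 * H ^ 2 - 2 * H) := Real.sq_sqrt hD
  set lam : ℝ := ((N + 2 * H - 2) + r) / 2 with hlam
  have hq : lam ^ 2 - (N + 2 * H - 2) * lam + (2 * H ^ 2 - 2 * H) = 0 := by
    rw [hlam]; linear_combination hr2 / 4
  -- β < lam
  set e : ℝ := (2 * H ^ 2 - 2 * H) / (N + 2 * H - 3) with hedef
  have he : e * (N + 2 * H - 3) = 2 * H ^ 2 - 2 * H := div_mul_cancel₀ _ hm.ne'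
  have he0 : 0 < e := div_pos hc hm
  have he1 : e < 1 := (div_lt_one hm).mpr hcm
  have hsq : ((N + 2 * H - 2) - 2 * e) ^ 2
      < (N + 2 * H - 2) ^ 2 - 4 * (2 * H ^ 2 - 2 * H) := by
    nlinarith [mul_pos he0 (show (0 : ℝ) < 1 - e by linarith)]
  have hkey : (N + 2 * H - 2) - 2 * e < r := by
    rw [hrdef]
    exact (Real.lt_sqrt (by nlinarith)).mpr hsq
  have hbl : N + 2 * H - 2 - 2 * (H ^ 2 - H) / (N + 2 * H - 3) < lam := by
    have h2e : 2 * (H ^ 2 - H) / (N + 2 * H - 3) = e := by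
      rw [hedef]; ring_nf
    rw [h2e, hlam]
    linarith
  -- lam is an eigenvalue of Q(S_{n,h})
  have hhn : h < n := by nlinarith [hh, hn, sq_nonneg h]
  set x : Fin n → ℝ := fun v => if v.val < h then lam - H else H with hxdef
  have hxne : x ≠ 0 := by
    intro h0
    have hx0 := congrFun h0 ⟨h, hhn⟩
    simp only [hxdef, Pi.zero_apply] at hx0
    rw [if_neg (by simp)] at hx0
    rw [hx0] at hh2
    linarith
  have heig := snh_eigen' n h lam hhn (by rw [← hN, ← hH]; exact hq)
  have hmem : lam ∈ spectrum ℝ (Qmat (Snh n h)) :=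
    mem_spectrum_of_eigen' (Snh n h) lam x hxne heig
  have hle := le_qspec' (Snh n h) lam hmem
  linarith
end

section
/- For every graph G with minimum degree at least 1, the signless Laplacian spectral radius satisfies q(G) ≤ max over vertices v of ( d(v) + (1/d(v)) · Σ_{z ∈ N(v)} d(z) ). -/
open scoped Classical

lemma spec_toLin' {V : Type*} [Fintype V] [DecidableEq V] (M : Matrix V V ℝ) :
    spectrum ℝ (Matrix.toLin' M) = spectrum ℝ M :=
  AlgEquiv.spectrum_eq Matrix.toLinAlgEquiv' M

/-- Merris: `q(G) ≤ max_v (d(v) + (1/d(v)) ∑_{z ∈ N(v)} d(z))`. -/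
theorem stmt_9 {V : Type*} [Fintype V] [DecidableEq V] (G : SimpleGraph V)
    (hδ : ∀ v, 1 ≤ G.degree v) :
    qspec G ≤ sSup {x : ℝ | ∃ v : V,
      x = (G.degree v : ℝ) +
        (1 / (G.degree v : ℝ)) * ∑ z ∈ G.neighborFinset v, (G.degree z : ℝ)} := by
  set f : V → ℝ := fun v => (G.degree v : ℝ) +
      (1 / (G.degree v : ℝ)) * ∑ z ∈ G.neighborFinset v, (G.degree z : ℝ) with hf
  have hset : {x : ℝ | ∃ v : V, x = f v} = Set.range f := by
    ext x; simp [eq_comm]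
  cases isEmpty_or_nonempty V with
  | inl h =>
    have h1 : spectrum ℝ (Qmat G) = ∅ := by
      have : (Qmat G) = 1 := Subsingleton.elim _ _
      rw [this]
      ext μ
      simp only [spectrum.mem_iff, Set.mem_empty_iff_false, iff_false, not_not]
      exact isUnit_of_subsingleton _
    have h2 : {x : ℝ | ∃ v : V, x = f v} = ∅ := by
      ext x; simp
    rw [qspec, h1, h2]
  | inr h =>
    have hd : ∀ v, (0:ℝ) < (G.degree v : ℝ) := fun v => by
      exact_mod_cast Nat.lt_of_lt_of_le Nat.zero_lt_one (hδ v)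
    have hdne : ∀ v, (G.degree v : ℝ) ≠ 0 := fun v => (hd v).ne'
    -- the conjugating unit
    set d : V → ℝ := fun v => (G.degree v : ℝ)
    have hu1 : Matrix.diagonal d * Matrix.diagonal (fun v => (d v)⁻¹) = 1 := by
      rw [Matrix.diagonal_mul_diagonal]
      convert Matrix.diagonal_one
      exact mul_inv_cancel₀ (hdne _)
    have hu2 : Matrix.diagonal (fun v => (d v)⁻¹) * Matrix.diagonal d = 1 := by
      rw [Matrix.diagonal_mul_diagonal]
      convert Matrix.diagonal_one
      exact inv_mul_cancel₀ (hdne _)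
    set u : (Matrix V V ℝ)ˣ := ⟨Matrix.diagonal d, Matrix.diagonal fun v => (d v)⁻¹, hu1, hu2⟩
    set B : Matrix V V ℝ := (u⁻¹ : (Matrix V V ℝ)ˣ).val * Qmat G * u.val with hB
    have hspec : spectrum ℝ B = spectrum ℝ (Qmat G) := spectrum.units_conjugate' (a := Qmat G) (u := u)
    -- entries of B
    have hBentry : ∀ i j, B i j = (d i)⁻¹ * Qmat G i j * d j := by
      intro i j
      rw [hB]
      show (Matrix.diagonal (fun v => (d v)⁻¹) * Qmat G * Matrix.diagonal d) i j = _
      rw [Matrix.mul_diagonal, Matrix.diagonal_mul]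
    have hQdiag : ∀ i, Qmat G i i = d i := by
      intro i
      simp [Qmat, Matrix.diagonal, d]
    have hQoff : ∀ i j, i ≠ j → Qmat G i j = if G.Adj i j then 1 else 0 := by
      intro i j hij
      simp [Qmat, Matrix.diagonal_apply_ne _ hij]
    -- the set is bounded above and f v is a member
    have hbdd : BddAbove {x : ℝ | ∃ v : V, x = f v} := by
      rw [hset]; exact (Set.finite_range f).bddAbove
    have hmem : ∀ v, f v ∈ {x : ℝ | ∃ v : V, x = f v} := fun v => ⟨v, rfl⟩
    have hfnonneg : ∀ v, 0 ≤ f v := by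
      intro v
      have h1 : 0 ≤ ∑ z ∈ G.neighborFinset v, (G.degree z : ℝ) :=
        Finset.sum_nonneg fun z _ => Nat.cast_nonneg _
      have h2 : (0:ℝ) ≤ 1 / (G.degree v : ℝ) := by
        have := hd v; positivity
      exact add_nonneg (Nat.cast_nonneg _) (mul_nonneg h2 h1)
    obtain ⟨v0⟩ := h
    have hS0 : (0:ℝ) ≤ sSup {x : ℝ | ∃ v : V, x = f v} :=
      le_trans (hfnonneg v0) (le_csSup hbdd (hmem v0))
    apply Real.sSup_le _ hS0
    intro μ hμ
    rw [← hspec] at hμ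
    have heig : Module.End.HasEigenvalue (Matrix.toLin' B) μ := by
      rw [Module.End.hasEigenvalue_iff_mem_spectrum, spec_toLin']
      exact hμ
    obtain ⟨k, hk⟩ := eigenvalue_mem_ball heig
    rw [Metric.mem_closedBall, Real.dist_eq] at hk
    have hrow : ∑ j ∈ Finset.univ.erase k, ‖B k j‖
        = (1 / d k) * ∑ z ∈ G.neighborFinset k, (G.degree z : ℝ) := by
      have h1 : ∀ j ∈ Finset.univ.erase k,
          ‖B k j‖ = if G.Adj k j then (1 / d k) * d j else 0 := by
        intro j hj
        have hjk : j ≠ k := Finset.ne_of_mem_erase hj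
        rw [hBentry, hQoff k j (Ne.symm hjk)]
        split_ifs with h
        · rw [Real.norm_eq_abs, abs_of_nonneg]
          · ring
          · have h2 := hd k; have h3 := hd j
            have h4 : (0:ℝ) < d k := h2
            have h5 : (0:ℝ) < d j := h3
            positivity
        · simp
      rw [Finset.sum_congr rfl h1,
          Finset.sum_erase _ (by simp [G.irrefl]),
          ← Finset.sum_filter, ← SimpleGraph.neighborFinset_eq_filter, Finset.mul_sum]
    have hBkk : B k k = d k := by
      rw [hBentry, hQdiag]
      field_simp
    have hμle : μ ≤ f k := by
      have h6 : μ - B k k ≤ |μ - B k k| := le_abs_self _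
      have : μ ≤ B k k + ∑ j ∈ Finset.univ.erase k, ‖B k j‖ := by linarith [hk]
      rw [hBkk, hrow] at this
      exact this
    exact le_trans hμle (le_csSup hbdd (hmem k))
end

section
/- For every graph G of order n ≥ 2, the signless Laplacian spectral radius satisfies q(G) ≤ 2e(G)/(n−1) + n − 2. -/
open scoped Classical

/-- `q(G) ≤ 2e(G)/(n-1) + n - 2`. -/
theorem stmt_10 {V : Type*} [Fintype V] [DecidableEq V] (G : SimpleGraph V)
    (hn : 2 ≤ Fintype.card V) :
    qspec G ≤ 2 * (ecount G : ℝ) / ((Fintype.card V : ℝ) - 1) + (Fintype.card V : ℝ) - 2 := by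
  classical
  have hcard : (2:ℝ) ≤ (Fintype.card V : ℝ) := by exact_mod_cast hn
  have hn'pos : (0:ℝ) < (Fintype.card V : ℝ) - 1 := by linarith
  have hB0 : (0:ℝ) ≤ 2 * (ecount G : ℝ) / ((Fintype.card V : ℝ) - 1) + (Fintype.card V : ℝ) - 2 := by
    have h1 : (0:ℝ) ≤ 2 * (ecount G : ℝ) / ((Fintype.card V : ℝ) - 1) := by positivity
    linarith
  apply Real.sSup_le _ hB0
  intro lam hlam
  -- extract an eigenvector
  rw [spectrum.mem_iff] at hlam
  have hdet : (lam • (1 : Matrix V V ℝ) - Qmat G).det = 0 := by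
    by_contra h
    apply hlam
    rw [Algebra.algebraMap_eq_smul_one]
    exact (Matrix.isUnit_iff_isUnit_det _).2 (isUnit_iff_ne_zero.2 h)
  obtain ⟨x, hx0, hxz⟩ := Matrix.exists_mulVec_eq_zero_iff.2 hdet
  have hxe : (Qmat G).mulVec x = lam • x := by
    rw [Matrix.sub_mulVec, sub_eq_zero] at hxz
    rw [← hxz, Matrix.smul_mulVec, Matrix.one_mulVec]
  -- row formula for Q
  have hQ : ∀ v, ((Qmat G).mulVec x) v
      = (G.degree v : ℝ) * x v + ∑ w ∈ G.neighborFinset v, x w := by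
    intro v
    simp [Qmat, Matrix.add_mulVec, Matrix.mulVec_diagonal,
      SimpleGraph.adjMatrix_mulVec_apply]
  by_cases hlam0 : lam ≤ 0
  · linarith
  push_neg at hlam0
  -- x vanishes on isolated vertices
  have hiso : ∀ v, G.degree v = 0 → x v = 0 := by
    intro v hv
    have hN : G.neighborFinset v = ∅ := by
      rw [← Finset.card_eq_zero, SimpleGraph.card_neighborFinset_eq_degree, hv]
    have h1 : ((Qmat G).mulVec x) v = 0 := by
      rw [hQ v, hv, hN]
      simp
    rw [hxe] at h1
    have : lam * x v = 0 := h1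
    rcases mul_eq_zero.1 this with h | h
    · exact absurd h (ne_of_gt hlam0)
    · exact h
  -- a vertex where x is nonzero has positive degree
  obtain ⟨v0, hv0⟩ : ∃ v, x v ≠ 0 := Function.ne_iff.1 hx0
  have hv0d : 0 < G.degree v0 := by
    rcases Nat.eq_zero_or_pos (G.degree v0) with h | h
    · exact absurd (hiso v0 h) hv0
    · exact h
  -- maximizer of |x v| / deg v over positive-degree vertices
  set S : Finset V := Finset.univ.filter (fun v => 0 < G.degree v) with hSdef
  have hv0S : v0 ∈ S := by simp [hSdef, hv0d]
  obtain ⟨u, huS, hmax⟩ := Finset.exists_max_image S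
    (fun v => |x v| / (G.degree v : ℝ)) ⟨v0, hv0S⟩
  have hud : 0 < G.degree u := by
    have := huS; simp [hSdef] at this; exact this
  have hudR : (1:ℝ) ≤ (G.degree u : ℝ) := by exact_mod_cast hud
  have hudR0 : (0:ℝ) < (G.degree u : ℝ) := by linarith
  have hMpos : 0 < |x u| / (G.degree u : ℝ) := by
    have h1 : 0 < |x v0| / (G.degree v0 : ℝ) := by
      apply div_pos (abs_pos.2 hv0)
      exact_mod_cast hv0d
    exact lt_of_lt_of_le h1 (hmax v0 hv0S)
  have hxu : 0 < |x u| := by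
    have := mul_pos hMpos hudR0
    rwa [div_mul_cancel₀] at this
    exact ne_of_gt hudR0
  -- main eigenvalue inequality: lam * deg u ≤ deg u ^ 2 + sum of neighbor degrees
  have heig : lam * (G.degree u : ℝ) * (|x u| / (G.degree u : ℝ))
      ≤ ((G.degree u : ℝ)^2 + ∑ w ∈ G.neighborFinset u, (G.degree w : ℝ))
        * (|x u| / (G.degree u : ℝ)) := by
    have h1 : lam * x u = (G.degree u : ℝ) * x u + ∑ w ∈ G.neighborFinset u, x w := by
      rw [← hQ u, hxe]; rfl
    have h2 : lam * |x u| ≤ (G.degree u : ℝ) * |x u|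
        + ∑ w ∈ G.neighborFinset u, |x w| := by
      calc lam * |x u| = |lam * x u| := by
            rw [abs_mul, abs_of_pos hlam0]
        _ = |(G.degree u : ℝ) * x u + ∑ w ∈ G.neighborFinset u, x w| := by rw [h1]
        _ ≤ |(G.degree u : ℝ) * x u| + |∑ w ∈ G.neighborFinset u, x w| := abs_add_le _ _
        _ ≤ (G.degree u : ℝ) * |x u| + ∑ w ∈ G.neighborFinset u, |x w| := by
            gcongr
            · rw [abs_mul, abs_of_nonneg (by positivity : (0:ℝ) ≤ (G.degree u : ℝ))]
            · exact Finset.abs_sum_le_sum_abs _ _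
    have h3 : ∑ w ∈ G.neighborFinset u, |x w|
        ≤ ∑ w ∈ G.neighborFinset u, (G.degree w : ℝ) * (|x u| / (G.degree u : ℝ)) := by
      apply Finset.sum_le_sum
      intro w hw
      have hadj : G.Adj u w := (SimpleGraph.mem_neighborFinset _ _ _).1 hw
      have hwd : 0 < G.degree w :=
        (G.degree_pos_iff_exists_adj w).2 ⟨u, hadj.symm⟩
      have hwS : w ∈ S := by simp [hSdef, hwd]
      have hwdR : (0:ℝ) < (G.degree w : ℝ) := by exact_mod_cast hwd
      have := hmax w hwS
      calc |x w| = |x w| / (G.degree w : ℝ) * (G.degree w : ℝ) := by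
            field_simp
        _ ≤ |x u| / (G.degree u : ℝ) * (G.degree w : ℝ) := by
            apply mul_le_mul_of_nonneg_right this (le_of_lt hwdR)
        _ = (G.degree w : ℝ) * (|x u| / (G.degree u : ℝ)) := by ring
    have h4 : |x u| = (G.degree u : ℝ) * (|x u| / (G.degree u : ℝ)) := by
      field_simp
    have hne : (G.degree u : ℝ) ≠ 0 := ne_of_gt hudR0
    calc lam * (G.degree u : ℝ) * (|x u| / (G.degree u : ℝ)) = lam * |x u| := by
          field_simp
      _ ≤ (G.degree u : ℝ) * |x u| + ∑ w ∈ G.neighborFinset u, |x w| := h2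
      _ ≤ (G.degree u : ℝ) * |x u|
          + ∑ w ∈ G.neighborFinset u, (G.degree w : ℝ) * (|x u| / (G.degree u : ℝ)) := by
          linarith
      _ = ((G.degree u : ℝ)^2 + ∑ w ∈ G.neighborFinset u, (G.degree w : ℝ))
          * (|x u| / (G.degree u : ℝ)) := by
          rw [add_mul, Finset.sum_mul, sq, mul_assoc, ← h4]
  have heig2 : lam * (G.degree u : ℝ)
      ≤ (G.degree u : ℝ)^2 + ∑ w ∈ G.neighborFinset u, (G.degree w : ℝ) :=
    le_of_mul_le_mul_right (by simpa using heig) hMpos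
  -- counting facts
  set N := G.neighborFinset u with hNdef
  set Z := Finset.univ.filter (fun v => G.degree v = 0) with hZdef
  set R := (Finset.univ : Finset V) \ insert u N with hRdef
  have huN : u ∉ N := by simp [hNdef]
  have hNcard : N.card = G.degree u := SimpleGraph.card_neighborFinset_eq_degree G u
  have hcardIns : (insert u N).card = G.degree u + 1 := by
    rw [Finset.card_insert_of_notMem huN, hNcard]
  -- (b)
  have hb : R.card + (G.degree u + 1) = Fintype.card V := by
    rw [hRdef, Finset.card_sdiff_of_subset (Finset.subset_univ _), hcardIns, Finset.card_univ]
    exact Nat.sub_add_cancel (by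
      calc G.degree u + 1 = (insert u N).card := hcardIns.symm
        _ ≤ Fintype.card V := by
            rw [← Finset.card_univ]; exact Finset.card_le_card (Finset.subset_univ _))
  -- (a)
  have ha : ∑ v, G.degree v
      = G.degree u + (∑ w ∈ N, G.degree w) + (∑ w ∈ R, G.degree w) := by
    have h1 := Finset.sum_sdiff (f := fun v => G.degree v)
      (Finset.subset_univ (insert u N))
    rw [Finset.sum_insert huN] at h1
    rw [← h1, ← hRdef]
    ring
  -- (c) each neighbor has degree ≤ n - 1 - z
  have hc : ∀ w ∈ N, G.degree w + (Z.card + 1) ≤ Fintype.card V := by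
    intro w hw
    have hadj : G.Adj u w := (SimpleGraph.mem_neighborFinset _ _ _).1 hw
    have hwZ : w ∉ Z := by
      simp only [hZdef, Finset.mem_filter]
      rintro ⟨-, h0⟩
      exact absurd ((G.degree_pos_iff_exists_adj w).2 ⟨u, hadj.symm⟩) (by omega)
    have hdisj : Disjoint (G.neighborFinset w) (insert w Z) := by
      rw [Finset.disjoint_left]
      intro a ha hains
      have haadj : G.Adj w a := (SimpleGraph.mem_neighborFinset _ _ _).1 ha
      rcases Finset.mem_insert.1 hains with rfl | haZ
      · exact G.irrefl haadj
      · have : G.degree a = 0 := by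
          have := haZ; simp only [hZdef, Finset.mem_filter] at this; exact this.2
        exact absurd ((G.degree_pos_iff_exists_adj a).2 ⟨w, haadj.symm⟩) (by omega)
    calc G.degree w + (Z.card + 1)
        = (G.neighborFinset w).card + (insert w Z).card := by
          rw [SimpleGraph.card_neighborFinset_eq_degree,
            Finset.card_insert_of_notMem hwZ]
      _ = (G.neighborFinset w ∪ insert w Z).card :=
          (Finset.card_union_of_disjoint hdisj).symm
      _ ≤ Fintype.card V := by
          rw [← Finset.card_univ]; exact Finset.card_le_card (Finset.subset_univ _)
  have hcS : (∑ w ∈ N, G.degree w) + G.degree u * (Z.card + 1)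
      ≤ G.degree u * Fintype.card V := by
    have := Finset.sum_le_sum hc
    rw [Finset.sum_add_distrib, Finset.sum_const, Finset.sum_const, hNcard,
      smul_eq_mul, smul_eq_mul] at this
    exact this
  -- (d) nonneighbors: r ≤ T + z
  have hd : R.card ≤ (∑ w ∈ R, G.degree w) + Z.card := by
    have h1 : R.card ≤ (R \ Z).card + Z.card := Finset.card_le_card_sdiff_add_card
    have h2 : (R \ Z).card ≤ ∑ w ∈ R \ Z, G.degree w := by
      rw [Finset.card_eq_sum_ones]
      apply Finset.sum_le_sum
      intro w hw
      have hwZ : w ∉ Z := (Finset.mem_sdiff.1 hw).2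
      simp only [hZdef, Finset.mem_filter, Finset.mem_univ, true_and] at hwZ
      omega
    have h3 : ∑ w ∈ R \ Z, G.degree w ≤ ∑ w ∈ R, G.degree w :=
      Finset.sum_le_sum_of_subset Finset.sdiff_subset
    omega
  -- (e) isolated vertices are nonneighbors of u
  have he : Z.card ≤ R.card := by
    apply Finset.card_le_card
    intro i hi
    have hi0 : G.degree i = 0 := by
      simp only [hZdef, Finset.mem_filter, Finset.mem_univ, true_and] at hi; exact hi
    rw [hRdef, Finset.mem_sdiff]
    refine ⟨Finset.mem_univ _, ?_⟩
    intro hmem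
    rcases Finset.mem_insert.1 hmem with rfl | hiN
    · omega
    · have : G.Adj u i := (SimpleGraph.mem_neighborFinset _ _ _).1 hiN
      exact absurd ((G.degree_pos_iff_exists_adj i).2 ⟨u, this.symm⟩) (by omega)
  have hzr : Z.card ≤ Z.card * R.card := by
    rcases Nat.eq_zero_or_pos Z.card with h | h
    · omega
    · have h1 : 1 ≤ R.card := le_trans h he
      calc Z.card = Z.card * 1 := (mul_one _).symm
        _ ≤ Z.card * R.card := Nat.mul_le_mul_left _ h1
  -- edge count
  have hec : (ecount G : ℕ) = G.edgeFinset.card := by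
    rw [ecount, ← SimpleGraph.coe_edgeFinset, Set.ncard_coe_finset]
  have hE2 : ∑ v, G.degree v = 2 * ecount G := by
    rw [hec]; exact G.sum_degrees_eq_twice_card_edges
  -- pass to the reals
  set dR : ℝ := (G.degree u : ℝ) with hdRdef
  set SR : ℝ := ∑ w ∈ N, (G.degree w : ℝ) with hSRdef
  set TR : ℝ := ∑ w ∈ R, (G.degree w : ℝ) with hTRdef
  set zR : ℝ := (Z.card : ℝ) with hzRdef
  set rR : ℝ := (R.card : ℝ) with hrRdef
  set nR : ℝ := (Fintype.card V : ℝ) with hnRdef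
  set eR : ℝ := (ecount G : ℝ) with heRdef
  have haR : 2 * eR = dR + SR + TR := by
    have h := ha
    rw [hE2] at h
    rw [heRdef, hdRdef, hSRdef, hTRdef, ← Nat.cast_sum, ← Nat.cast_sum]
    exact_mod_cast h
  have hbR : rR + dR + 1 = nR := by
    rw [hrRdef, hdRdef, hnRdef]; push_cast [← hb]; ring
  have hcR : SR + dR * (zR + 1) ≤ dR * nR := by
    rw [hSRdef, hdRdef, hzRdef, hnRdef, ← Nat.cast_sum]
    exact_mod_cast hcS
  have hdR' : rR ≤ TR + zR := by
    rw [hrRdef, hTRdef, hzRdef, ← Nat.cast_sum]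
    exact_mod_cast hd
  have hzrR : zR ≤ zR * rR := by
    rw [hzRdef, hrRdef]; exact_mod_cast hzr
  have hzR0 : 0 ≤ zR := by rw [hzRdef]; positivity
  have hrR0 : 0 ≤ rR := by rw [hrRdef]; positivity
  have hdR1 : (1:ℝ) ≤ dR := hudR
  have hdR0 : (0:ℝ) < dR := hudR0
  -- key inequality: d^2 * n' + S * n' ≤ d * E + d * n' * (n' - 1)
  have hkey : dR^2 * (nR - 1) + SR * (nR - 1)
      ≤ dR * (2 * eR) + dR * (nR - 1) * (nR - 2) := by
    have hcR' : SR + dR * (zR + 1) ≤ dR * (rR + dR + 1) := by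
      rw [hbR]; exact hcR
    have h1 : rR * (SR + dR * (zR + 1)) ≤ rR * (dR * (rR + dR + 1)) :=
      mul_le_mul_of_nonneg_left hcR' hrR0
    have h2 : dR * rR ≤ dR * (TR + zR) :=
      mul_le_mul_of_nonneg_left hdR' (le_of_lt hdR0)
    have h3 : dR * zR ≤ dR * (zR * rR) :=
      mul_le_mul_of_nonneg_left hzrR (le_of_lt hdR0)
    rw [← hbR, haR]
    ring_nf
    ring_nf at h1 h2 h3
    linarith [h1, h2, h3]
  -- conclude
  have heig3 : lam * dR ≤ dR^2 + SR := heig2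
  have hfinal : lam * (nR - 1) ≤ 2 * eR + (nR - 1) * (nR - 2) := by
    have hn'0 : (0:ℝ) ≤ nR - 1 := le_of_lt hn'pos
    have h5 : lam * dR * (nR - 1) ≤ (dR^2 + SR) * (nR - 1) :=
      mul_le_mul_of_nonneg_right heig3 hn'0
    have h6 : lam * (nR - 1) * dR ≤ (2 * eR + (nR - 1) * (nR - 2)) * dR := by
      ring_nf
      ring_nf at hkey h5
      linarith [hkey, h5]
    exact le_of_mul_le_mul_right h6 hdR0
  have hgoal : 2 * eR / (nR - 1) + nR - 2 = (2 * eR + (nR - 1) * (nR - 2)) / (nR - 1) := by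
    field_simp
    ring
  rw [hgoal, le_div_iff₀ hn'pos]
  linarith [hfinal]
end

section
/- For h ≥ 3, t_1, t_2 ≥ 0, and n = t_1·h + t_2·(h+1) + 1 ≥ 7h², the signless Laplacian spectral radius satisfies q(L_{t_1,t_2,h,h+1}) < q(S_{n,h}). -/
open scoped Classical

section AuxProof
open Matrix SimpleGraph Finset

lemma eigen_mem_spectrum {n : Type*} [Fintype n] [DecidableEq n] (M : Matrix n n ℝ) (μ : ℝ)
    (x : n → ℝ) (hx : x ≠ 0) (hMx : M *ᵥ x = μ • x) : μ ∈ spectrum ℝ M := by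
  rw [spectrum.mem_iff]
  intro hUnit
  rw [Matrix.isUnit_iff_isUnit_det, isUnit_iff_ne_zero] at hUnit
  apply hUnit
  rw [← Matrix.exists_mulVec_eq_zero_iff]
  refine ⟨x, hx, ?_⟩
  rw [Matrix.sub_mulVec, hMx]
  ext u
  simp [Matrix.algebraMap_eq_diagonal, Matrix.mulVec_diagonal]

open Matrix SimpleGraph Finset in

lemma exists_eigen_of_mem_spectrum {n : Type*} [Fintype n] [DecidableEq n] (M : Matrix n n ℝ)
    (μ : ℝ) (hμ : μ ∈ spectrum ℝ M) : ∃ x, x ≠ 0 ∧ M *ᵥ x = μ • x := by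
  rw [spectrum.mem_iff, Matrix.isUnit_iff_isUnit_det, isUnit_iff_ne_zero, not_not] at hμ
  rw [← Matrix.exists_mulVec_eq_zero_iff] at hμ
  obtain ⟨x, hx, hx0⟩ := hμ
  refine ⟨x, hx, ?_⟩
  rw [Matrix.sub_mulVec] at hx0
  have : ∀ u, ((algebraMap ℝ (Matrix n n ℝ)) μ *ᵥ x) u = (μ • x) u := by
    intro u; simp [Matrix.algebraMap_eq_diagonal, Matrix.mulVec_diagonal]
  ext u
  have h0 := congrFun hx0 u
  have h1 := this u
  simp only [Pi.sub_apply, Pi.zero_apply, sub_eq_zero] at h0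
  rw [← h0, h1]

open Matrix SimpleGraph Finset in

lemma Qmat_mulVec {V : Type*} [Fintype V] [DecidableEq V] (G : SimpleGraph V) (x : V → ℝ)
    (u : V) :
    (Qmat G *ᵥ x) u = (G.degree u : ℝ) * x u + ∑ v ∈ G.neighborFinset u, x v := by
  classical
  simp [Qmat, Matrix.add_mulVec, Matrix.mulVec_diagonal, SimpleGraph.adjMatrix_mulVec_apply]

lemma spec_le_two_card {V : Type*} [Fintype V] [DecidableEq V] (G : SimpleGraph V) (μ : ℝ)
    (hμ : μ ∈ spectrum ℝ (Qmat G)) : μ ≤ 2 * Fintype.card V := by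
  obtain ⟨x, hx, hMx⟩ := exists_eigen_of_mem_spectrum _ _ hμ
  have hne : (Finset.univ : Finset V).Nonempty := by
    obtain ⟨v, hv⟩ := Function.ne_iff.mp hx
    exact ⟨v, Finset.mem_univ v⟩
  obtain ⟨u, -, hu⟩ := Finset.exists_max_image Finset.univ (fun v => |x v|) hne
  have hxu : 0 < |x u| := by
    obtain ⟨v, hv⟩ := Function.ne_iff.mp hx
    have := hu v (Finset.mem_univ v)
    have : 0 < |x v| := abs_pos.mpr hv
    linarith [hu v (Finset.mem_univ v)]
  have heq : (μ - G.degree u) * x u = ∑ v ∈ G.neighborFinset u, x v := by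
    have h1 := Qmat_mulVec G x u
    have h2 : (Qmat G *ᵥ x) u = μ * x u := by rw [hMx]; simp
    rw [h2] at h1; linarith
  have hbound : |μ - G.degree u| * |x u| ≤ (G.degree u : ℝ) * |x u| := by
    rw [← abs_mul, heq]
    calc |∑ v ∈ G.neighborFinset u, x v| ≤ ∑ v ∈ G.neighborFinset u, |x v| :=
          Finset.abs_sum_le_sum_abs _ _
    _ ≤ ∑ v ∈ G.neighborFinset u, |x u| := by
        exact Finset.sum_le_sum fun v _ => hu v (Finset.mem_univ v)
    _ = (G.degree u : ℝ) * |x u| := by rw [Finset.sum_const, SimpleGraph.card_neighborFinset_eq_degree]; ring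
  have h3 : |μ - G.degree u| ≤ G.degree u := le_of_mul_le_mul_right (by linarith [hbound]) hxu
  have h4 : (G.degree u : ℝ) ≤ Fintype.card V := by
    exact_mod_cast le_trans (SimpleGraph.degree_le_maxDegree G u) (le_trans (G.maxDegree_le_of_forall_degree_le (Fintype.card V) (fun v => (G.degree_lt_card_verts v).le)) le_rfl)
  have := abs_le.mp h3
  linarith [this.1, this.2]

lemma spec_le_of_deg {V : Type*} [Fintype V] [DecidableEq V] (G : SimpleGraph V) (K : ℝ)
    (hK0 : 0 ≤ K)
    (hd : ∀ u, 0 < G.degree u)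
    (hK : ∀ u, (G.degree u : ℝ)^2 + ∑ v ∈ G.neighborFinset u, (G.degree v : ℝ) ≤ K * G.degree u)
    (μ : ℝ) (hμ : μ ∈ spectrum ℝ (Qmat G)) : μ ≤ K := by
  obtain ⟨x, hx, hMx⟩ := exists_eigen_of_mem_spectrum _ _ hμ
  have hne : (Finset.univ : Finset V).Nonempty := by
    obtain ⟨v, hv⟩ := Function.ne_iff.mp hx
    exact ⟨v, Finset.mem_univ v⟩
  obtain ⟨u, -, hu⟩ := Finset.exists_max_image Finset.univ (fun v => |x v| / G.degree v) hne
  set c := |x u| / G.degree u with hc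
  have hdu : (0:ℝ) < G.degree u := by exact_mod_cast hd u
  have hcv : ∀ v, |x v| ≤ c * G.degree v := by
    intro v
    have hdv : (0:ℝ) < G.degree v := by exact_mod_cast hd v
    have := hu v (Finset.mem_univ v)
    calc |x v| = (|x v| / G.degree v) * G.degree v := by field_simp
    _ ≤ c * G.degree v := by apply mul_le_mul_of_nonneg_right this hdv.le
  have hcpos : 0 < c := by
    obtain ⟨v, hv⟩ := Function.ne_iff.mp hx
    have hdv : (0:ℝ) < G.degree v := by exact_mod_cast hd v
    have h1 : 0 < |x v| := abs_pos.mpr hv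
    nlinarith [hcv v]
  have hxu : |x u| = c * G.degree u := by rw [hc]; field_simp
  have heq : (μ - G.degree u) * x u = ∑ v ∈ G.neighborFinset u, x v := by
    have h1 := Qmat_mulVec G x u
    have h2 : (Qmat G *ᵥ x) u = μ * x u := by rw [hMx]; simp
    rw [h2] at h1; linarith
  have hbound : |μ - G.degree u| * (c * G.degree u) ≤ c * ∑ v ∈ G.neighborFinset u, (G.degree v : ℝ) := by
    rw [← hxu, ← abs_mul, heq]
    calc |∑ v ∈ G.neighborFinset u, x v| ≤ ∑ v ∈ G.neighborFinset u, |x v| :=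
          Finset.abs_sum_le_sum_abs _ _
    _ ≤ ∑ v ∈ G.neighborFinset u, c * G.degree v := Finset.sum_le_sum fun v _ => hcv v
    _ = c * ∑ v ∈ G.neighborFinset u, (G.degree v : ℝ) := by rw [Finset.mul_sum]
  have h5 : |μ - G.degree u| * G.degree u ≤ ∑ v ∈ G.neighborFinset u, (G.degree v : ℝ) := by
    have := (mul_le_mul_iff_right₀ hcpos).mp (by linarith [hbound] :
      c * (|μ - G.degree u| * G.degree u) ≤ c * ∑ v ∈ G.neighborFinset u, (G.degree v : ℝ))
    exact this
  have h6 : (μ - G.degree u) * G.degree u ≤ ∑ v ∈ G.neighborFinset u, (G.degree v : ℝ) :=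
    le_trans (mul_le_mul_of_nonneg_right (le_abs_self _) hdu.le) h5
  have h7 := hK u
  have : μ * G.degree u ≤ K * G.degree u := by nlinarith
  exact le_of_mul_le_mul_right this hdu

lemma card_filter_lt (n h : ℕ) (hn : h ≤ n) :
    (Finset.univ.filter (fun v : Fin n => v.val < h)).card = h := by
  rw [← Fintype.card_fin h]
  apply Finset.card_bij' (fun v _ => (⟨v.val, by simp_all⟩ : Fin h))
    (fun w _ => (⟨w.val, lt_of_lt_of_le w.isLt hn⟩ : Fin n)) <;> simp

lemma Snh_nf_lt {n h : ℕ} (u : Fin n) (hu : u.val < h) :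
    (Snh n h).neighborFinset u = Finset.univ.erase u := by
  ext v
  rw [SimpleGraph.mem_neighborFinset]
  simp [SimpleGraph.mem_neighborFinset, Snh, hu, ne_comm, eq_comm]

lemma Snh_nf_ge {n h : ℕ} (u : Fin n) (hu : h ≤ u.val) :
    (Snh n h).neighborFinset u = Finset.univ.filter (fun v : Fin n => v.val < h) := by
  ext v
  rw [SimpleGraph.mem_neighborFinset]
  simp only [SimpleGraph.mem_neighborFinset, Snh, Finset.mem_filter, Finset.mem_univ, true_and]
  constructor
  · rintro ⟨hne, h1 | h2⟩
    · omega
    · exact h2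
  · intro hv
    refine ⟨?_, Or.inr hv⟩
    intro he; rw [he] at hu; omega

lemma Snh_deg_lt {n h : ℕ} (u : Fin n) (hu : u.val < h) :
    (Snh n h).degree u = n - 1 := by
  rw [← SimpleGraph.card_neighborFinset_eq_degree, Snh_nf_lt u hu,
    Finset.card_erase_of_mem (Finset.mem_univ u), Finset.card_univ, Fintype.card_fin]

lemma Snh_deg_ge {n h : ℕ} (hn : h ≤ n) (u : Fin n) (hu : h ≤ u.val) :
    (Snh n h).degree u = h := by
  rw [← SimpleGraph.card_neighborFinset_eq_degree, Snh_nf_ge u hu, card_filter_lt n h hn]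

lemma Snh_qspec_lower (n h : ℕ) (hh : 3 ≤ h) (hn : 7 * h ^ 2 ≤ n) :
    ((n : ℝ) + h) < qspec (Snh n h) := by
  have hhn : h < n := by nlinarith
  have hh0 : (0:ℝ) < h := by positivity
  set B : ℝ := (n : ℝ) + 2 * h - 2 with hB
  set C : ℝ := 2 * (h:ℝ) ^ 2 - 2 * h with hC
  set D : ℝ := B ^ 2 - 4 * C with hD
  have hnR : (7:ℝ) * (h:ℝ)^2 ≤ (n:ℝ) := by exact_mod_cast hn
  have hhR : (3:ℝ) ≤ (h:ℝ) := by exact_mod_cast hh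
  have hDgt : ((n:ℝ) + 2) ^ 2 < D := by
    have : D - ((n:ℝ)+2)^2 = 4*((h:ℝ)-2)*((n:ℝ)+h) - 8*(h:ℝ)*((h:ℝ)-1) := by
      rw [hD, hB, hC]; ring
    nlinarith
  have hD0 : 0 ≤ D := by nlinarith
  set s : ℝ := Real.sqrt D with hs
  have hs2 : s ^ 2 = D := Real.sq_sqrt hD0
  have hsgt : (n:ℝ) + 2 < s := by
    rw [hs]
    exact (Real.lt_sqrt (by positivity)).mpr hDgt
  set μ : ℝ := (B + s) / 2 with hμdef
  have hμgt : (n:ℝ) + h < μ := by rw [hμdef, hB]; linarith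
  have hquad : μ ^ 2 = B * μ - C := by
    rw [hμdef]
    have : ((B + s)/2)^2 - B * ((B+s)/2) + C = (s^2 - D)/4 := by rw [hD]; ring
    nlinarith [this, hs2]
  set a : ℝ := (μ - h) / h with ha
  have hha : (h:ℝ) * a = μ - h := by rw [ha]; field_simp
  set x : Fin n → ℝ := fun v => if v.val < h then a else 1 with hxdef
  have hxne : x ≠ 0 := by
    intro h0
    have : x ⟨n-1, by omega⟩ = 0 := by rw [h0]; rfl
    rw [hxdef] at this
    simp only [show ¬((n-1) < h) by omega, if_false] at this
    norm_num at this
  have hsum : ∑ v : Fin n, x v = h * a + ((n:ℝ) - h) := by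
    rw [hxdef]
    rw [Finset.sum_ite]
    have h1 : (Finset.univ.filter (fun v : Fin n => v.val < h)).card = h :=
      card_filter_lt n h hhn.le
    have h2 : (Finset.univ.filter (fun v : Fin n => ¬ v.val < h)).card = n - h := by
      have := Finset.card_filter_add_card_filter_not
        (s := (Finset.univ : Finset (Fin n))) (p := fun v : Fin n => v.val < h)
      simp only [Finset.card_univ, Fintype.card_fin] at this
      omega
    rw [Finset.sum_const, Finset.sum_const, h1, h2]
    have : ((n - h : ℕ) : ℝ) = (n:ℝ) - h := by
      rw [Nat.cast_sub hhn.le]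
    simp [this]
  have hMx : Qmat (Snh n h) *ᵥ x = μ • x := by
    ext u
    rw [Qmat_mulVec]
    rcases lt_or_ge u.val h with hu | hu
    · rw [Snh_deg_lt u hu, Snh_nf_lt u hu,
        Finset.sum_erase_eq_sub (Finset.mem_univ u), hsum]
      have hxu : x u = a := by rw [hxdef]; simp [hu]
      have hn1 : ((n - 1 : ℕ) : ℝ) = (n:ℝ) - 1 := by
        rw [Nat.cast_sub (by omega)]; simp
      rw [hxu, hn1]
      have hrhs : (μ • x) u = μ * a := by simp [hxu]
      rw [hrhs]
      have expand : ((n:ℝ) - 1) * a + (↑h * a + ((n:ℝ) - ↑h) - a) - μ * a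
          = (((n:ℝ) + h - 2) * a + ((n:ℝ) - h) - μ * a) := by ring
      have key : (h:ℝ) * ((((n:ℝ) + h - 2) * a + ((n:ℝ) - h)) - μ * a) = 0 := by
        have e1 : (h:ℝ) * ((((n:ℝ) + h - 2) * a + ((n:ℝ) - h)) - μ * a)
            = ((n:ℝ) + h - 2) * (h * a) + h * ((n:ℝ) - h) - μ * (h * a) := by ring
        rw [e1, hha]
        rw [hB, hC] at hquad
        linear_combination -hquad
      have := mul_eq_zero.mp key
      rcases this with h0 | h0
      · exact absurd h0 (by positivity)
      · linarith
    · rw [Snh_deg_ge hhn.le u hu, Snh_nf_ge u hu]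
      have hxu : x u = 1 := by rw [hxdef]; simp [not_lt.mpr hu]
      have hsumf : ∑ v ∈ Finset.univ.filter (fun v : Fin n => v.val < h), x v
          = h * a := by
        rw [Finset.sum_congr rfl (fun v hv => ?_), Finset.sum_const,
          card_filter_lt n h hhn.le, nsmul_eq_mul]
        rw [hxdef]
        simp only [Finset.mem_filter] at hv
        simp [hv.2]
      rw [hxu, hsumf]
      have hrhs : (μ • x) u = μ := by simp [hxu]
      rw [hrhs, hha]
      ring
  have hmem : μ ∈ spectrum ℝ (Qmat (Snh n h)) := eigen_mem_spectrum _ μ x hxne hMx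
  have hbdd : BddAbove (spectrum ℝ (Qmat (Snh n h))) :=
    ⟨2 * Fintype.card (Fin n), fun y hy => spec_le_two_card _ y hy⟩
  exact lt_of_lt_of_le hμgt (le_csSup hbdd hmem)

lemma card_filter_Ico (n a b : ℕ) :
    (Finset.univ.filter (fun v : Fin n => a ≤ v.val ∧ v.val < b)).card ≤ b - a := by
  rw [← Nat.card_Ico a b]
  apply Finset.card_le_card_of_injOn (fun v => v.val)
  · intro v hv
    simp only [Finset.mem_coe, Finset.mem_filter] at hv
    simp [Finset.mem_Ico, hv.2.1, hv.2.2]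
  · intro x _ y _ hxy
    exact Fin.ext hxy

section Laux
variable (t1 t2 h : ℕ)
local notation "n" => t1 * h + t2 * (h + 1) + 1

lemma L_nf_zero : (Lt1t2 t1 t2 h).neighborFinset 0 = Finset.univ.erase 0 := by
  ext v
  rw [SimpleGraph.mem_neighborFinset]
  simp only [SimpleGraph.mem_neighborFinset, Lt1t2, Finset.mem_erase, Finset.mem_univ, and_true]
  constructor
  · rintro ⟨hne, -⟩; exact fun he => hne he.symm
  · intro hv; exact ⟨fun he => hv he.symm, Or.inl rfl⟩

lemma L_deg_zero : (Lt1t2 t1 t2 h).degree 0 = t1 * h + t2 * (h + 1) := by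
  rw [← SimpleGraph.card_neighborFinset_eq_degree, L_nf_zero,
    Finset.card_erase_of_mem (Finset.mem_univ 0), Finset.card_univ, Fintype.card_fin]
  omega

lemma L_adj_zero (u : Fin n) (hu : u ≠ 0) : (Lt1t2 t1 t2 h).Adj u 0 :=
  ⟨hu, Or.inr (Or.inl (Fin.val_zero _))⟩

lemma L_deg_pos (u : Fin n) (hu : u ≠ 0) : 0 < (Lt1t2 t1 t2 h).degree u := by
  rw [← SimpleGraph.card_neighborFinset_eq_degree]
  apply Finset.card_pos.mpr
  exact ⟨0, SimpleGraph.mem_neighborFinset _ _ _ |>.mpr (L_adj_zero t1 t2 h u hu)⟩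

lemma L_deg_le (hh : 0 < h) (u : Fin n) (hu : u ≠ 0) :
    (Lt1t2 t1 t2 h).degree u ≤ h + 1 := by
  have hu0 : 0 < u.val := Nat.pos_of_ne_zero (fun h0 => hu (Fin.ext (by simp [h0])))
  rcases le_or_gt u.val (t1 * h) with hcase | hcase
  · set k := (u.val - 1) / h with hk
    set lo := h * k + 1 with hlo
    have hub : lo ≤ u.val ∧ u.val < lo + h := by
      have e := Nat.div_add_mod (u.val - 1) h
      have m := Nat.mod_lt (u.val - 1) hh
      rw [← hk] at e
      omega
    have hsub : (Lt1t2 t1 t2 h).neighborFinset u ⊆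
        insert 0 ((Finset.univ.filter (fun v : Fin n => lo ≤ v.val ∧ v.val < lo + h)).erase u) := by
      intro v hv
      rw [SimpleGraph.mem_neighborFinset] at hv
      obtain ⟨hne, hadj⟩ := hv
      by_cases hv0 : v = 0
      · exact Finset.mem_insert.mpr (Or.inl hv0)
      have hv0' : 0 < v.val := Nat.pos_of_ne_zero (fun h0 => hv0 (Fin.ext (by simp [h0])))
      rcases hadj with h1 | h1 | ⟨h1, h2, h3⟩ | ⟨h1, -⟩
      · omega
      · omega
      · simp only [Finset.mem_insert, Finset.mem_erase, Finset.mem_filter, Finset.mem_univ]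
        right
        refine ⟨hne.symm, trivial, ?_⟩
        have e := Nat.div_add_mod (v.val - 1) h
        have m := Nat.mod_lt (v.val - 1) hh
        rw [← h3, ← hk] at e
        omega
      · omega
    have hmemu : u ∈ Finset.univ.filter (fun v : Fin n => lo ≤ v.val ∧ v.val < lo + h) := by
      simp only [Finset.mem_filter, Finset.mem_univ, true_and]
      exact hub
    have hcard := Finset.card_le_card hsub
    have h1 := Finset.card_insert_le (0 : Fin n)
      ((Finset.univ.filter (fun v : Fin n => lo ≤ v.val ∧ v.val < lo + h)).erase u)
    have h2 := Finset.card_erase_of_mem hmemu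
    have h3 := card_filter_Ico (t1 * h + t2 * (h + 1) + 1) lo (lo + h)
    rw [← SimpleGraph.card_neighborFinset_eq_degree]
    omega
  · set k := (u.val - 1 - t1 * h) / (h + 1) with hk
    set lo := t1 * h + (h + 1) * k + 1 with hlo
    have hub : lo ≤ u.val ∧ u.val < lo + (h + 1) := by
      have e := Nat.div_add_mod (u.val - 1 - t1 * h) (h + 1)
      have m := Nat.mod_lt (u.val - 1 - t1 * h) (by omega : 0 < h + 1)
      rw [← hk] at e
      omega
    have hsub : (Lt1t2 t1 t2 h).neighborFinset u ⊆
        insert 0 ((Finset.univ.filter (fun v : Fin n => lo ≤ v.val ∧ v.val < lo + (h + 1))).erase u) := by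
      intro v hv
      rw [SimpleGraph.mem_neighborFinset] at hv
      obtain ⟨hne, hadj⟩ := hv
      by_cases hv0 : v = 0
      · exact Finset.mem_insert.mpr (Or.inl hv0)
      have hv0' : 0 < v.val := Nat.pos_of_ne_zero (fun h0 => hv0 (Fin.ext (by simp [h0])))
      rcases hadj with h1 | h1 | ⟨h1, h2, h3⟩ | ⟨h1, h2, h3⟩
      · omega
      · omega
      · omega
      · simp only [Finset.mem_insert, Finset.mem_erase, Finset.mem_filter, Finset.mem_univ]
        right
        refine ⟨hne.symm, trivial, ?_⟩
        have e := Nat.div_add_mod (v.val - 1 - t1 * h) (h + 1)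
        have m := Nat.mod_lt (v.val - 1 - t1 * h) (by omega : 0 < h + 1)
        rw [← h3, ← hk] at e
        omega
    have hmemu : u ∈ Finset.univ.filter (fun v : Fin n => lo ≤ v.val ∧ v.val < lo + (h + 1)) := by
      simp only [Finset.mem_filter, Finset.mem_univ, true_and]
      exact hub
    have hcard := Finset.card_le_card hsub
    have h1 := Finset.card_insert_le (0 : Fin n)
      ((Finset.univ.filter (fun v : Fin n => lo ≤ v.val ∧ v.val < lo + (h + 1))).erase u)
    have h2 := Finset.card_erase_of_mem hmemu
    have h3 := card_filter_Ico (t1 * h + t2 * (h + 1) + 1) lo (lo + (h + 1))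
    rw [← SimpleGraph.card_neighborFinset_eq_degree]
    omega

lemma L_hK (hh : 3 ≤ h) (hn : 7 * h ^ 2 ≤ n) (u : Fin n) :
    ((Lt1t2 t1 t2 h).degree u : ℝ) ^ 2
      + ∑ v ∈ (Lt1t2 t1 t2 h).neighborFinset u, ((Lt1t2 t1 t2 h).degree v : ℝ)
      ≤ ((n : ℝ) + h) * (Lt1t2 t1 t2 h).degree u := by
  have hh0 : 0 < h := by omega
  have hNR : 7 * (h : ℝ) ^ 2 ≤ (t1 : ℝ) * h + t2 * (h + 1) + 1 := by exact_mod_cast hn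
  have hhR : (3 : ℝ) ≤ (h : ℝ) := by exact_mod_cast hh
  by_cases hu : u = 0
  · rw [hu]
    have hsum : ∑ v ∈ (Lt1t2 t1 t2 h).neighborFinset 0, ((Lt1t2 t1 t2 h).degree v : ℝ)
        ≤ ((t1 : ℝ) * h + t2 * (h + 1)) * (h + 1) := by
      rw [L_nf_zero]
      calc ∑ v ∈ Finset.univ.erase 0, ((Lt1t2 t1 t2 h).degree v : ℝ)
          ≤ ∑ _v ∈ Finset.univ.erase (0 : Fin n), ((h : ℝ) + 1) := by
            apply Finset.sum_le_sum
            intro v hv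
            have hvne : v ≠ 0 := (Finset.mem_erase.mp hv).1
            exact_mod_cast Nat.cast_le.mpr (L_deg_le t1 t2 h hh0 v hvne)
        _ = ((t1 : ℝ) * h + t2 * (h + 1)) * (h + 1) := by
            rw [Finset.sum_const, Finset.card_erase_of_mem (Finset.mem_univ 0),
              Finset.card_univ, Fintype.card_fin, nsmul_eq_mul]
            have : n - 1 = t1 * h + t2 * (h + 1) := by omega
            rw [this]
            push_cast
            ring
    have hdeg : ((Lt1t2 t1 t2 h).degree 0 : ℝ) = (t1 : ℝ) * h + t2 * (h + 1) := by
      rw [L_deg_zero]; push_cast; ring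
    rw [hdeg]
    push_cast
    nlinarith [hsum]
  · have h0mem : (0 : Fin n) ∈ (Lt1t2 t1 t2 h).neighborFinset u :=
      (SimpleGraph.mem_neighborFinset _ _ _).mpr (L_adj_zero t1 t2 h u hu)
    have hd1 : 1 ≤ (Lt1t2 t1 t2 h).degree u := L_deg_pos t1 t2 h u hu
    have hdh : (Lt1t2 t1 t2 h).degree u ≤ h + 1 := L_deg_le t1 t2 h hh0 u hu
    have hdR1 : (1 : ℝ) ≤ ((Lt1t2 t1 t2 h).degree u : ℝ) := by exact_mod_cast hd1
    have hdRh : ((Lt1t2 t1 t2 h).degree u : ℝ) ≤ (h : ℝ) + 1 := by exact_mod_cast hdh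
    have hsum : ∑ v ∈ (Lt1t2 t1 t2 h).neighborFinset u, ((Lt1t2 t1 t2 h).degree v : ℝ)
        ≤ ((t1 : ℝ) * h + t2 * (h + 1))
          + (((Lt1t2 t1 t2 h).degree u : ℝ) - 1) * ((h : ℝ) + 1) := by
      rw [← Finset.insert_erase h0mem, Finset.sum_insert (Finset.notMem_erase _ _)]
      have hcard : (((Lt1t2 t1 t2 h).neighborFinset u).erase 0).card
          = (Lt1t2 t1 t2 h).degree u - 1 := by
        rw [Finset.card_erase_of_mem h0mem, SimpleGraph.card_neighborFinset_eq_degree]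
      have hrest : ∑ v ∈ ((Lt1t2 t1 t2 h).neighborFinset u).erase 0,
          ((Lt1t2 t1 t2 h).degree v : ℝ)
          ≤ (((Lt1t2 t1 t2 h).degree u : ℝ) - 1) * ((h : ℝ) + 1) := by
        calc ∑ v ∈ ((Lt1t2 t1 t2 h).neighborFinset u).erase 0, ((Lt1t2 t1 t2 h).degree v : ℝ)
            ≤ ∑ _v ∈ ((Lt1t2 t1 t2 h).neighborFinset u).erase 0, ((h : ℝ) + 1) := by
              apply Finset.sum_le_sum
              intro v hv
              have hvne : v ≠ 0 := (Finset.mem_erase.mp hv).1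
              exact_mod_cast Nat.cast_le.mpr (L_deg_le t1 t2 h hh0 v hvne)
          _ = (((Lt1t2 t1 t2 h).degree u : ℝ) - 1) * ((h : ℝ) + 1) := by
              rw [Finset.sum_const, hcard, nsmul_eq_mul, Nat.cast_sub hd1]
              push_cast; ring
      have hdeg0 : ((Lt1t2 t1 t2 h).degree 0 : ℝ) = (t1 : ℝ) * h + t2 * (h + 1) := by
        rw [L_deg_zero]; push_cast; ring
      rw [hdeg0]
      linarith
    have goal2 : ((Lt1t2 t1 t2 h).degree u : ℝ) ^ 2
        + (((t1 : ℝ) * h + t2 * (h + 1))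
          + (((Lt1t2 t1 t2 h).degree u : ℝ) - 1) * ((h : ℝ) + 1))
        ≤ (((t1 : ℝ) * h + t2 * (h + 1) + 1) + h) * ((Lt1t2 t1 t2 h).degree u : ℝ) := by
      nlinarith [mul_nonneg (sub_nonneg.mpr hdR1) (sub_nonneg.mpr hdRh),
        mul_nonneg (sub_nonneg.mpr hdR1)
          (by nlinarith : (0:ℝ) ≤ (t1 : ℝ) * h + t2 * (h + 1) + 1 + (h:ℝ) + 2
            - 3 * ((Lt1t2 t1 t2 h).degree u : ℝ)),
        sq_nonneg (((Lt1t2 t1 t2 h).degree u : ℝ) - 1)]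
    push_cast
    linarith

end Laux
end AuxProof

/-- `q(L_{t₁,t₂,h,h+1}) < q(S_{n,h})`. -/
theorem stmt_12 (h t1 t2 : ℕ) (hh : 3 ≤ h)
    (hn : 7 * h ^ 2 ≤ t1 * h + t2 * (h + 1) + 1) :
    qspec (Lt1t2 t1 t2 h) < qspec (Snh (t1 * h + t2 * (h + 1) + 1) h) := by
  have hlow := Snh_qspec_lower (t1 * h + t2 * (h + 1) + 1) h hh hn
  have hup : qspec (Lt1t2 t1 t2 h) ≤ ((t1 * h + t2 * (h + 1) + 1 : ℕ) : ℝ) + h := by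
    apply Real.sSup_le
    · intro μ hμ
      apply spec_le_of_deg _ _ (by positivity) _ _ μ hμ
      · intro u
        by_cases hu : u = 0
        · rw [hu, L_deg_zero]
          have : 0 < 7 * h ^ 2 := by positivity
          omega
        · exact L_deg_pos t1 t2 h u hu
      · intro u
        have := L_hK t1 t2 h hh hn u
        push_cast
        push_cast at this
        convert this using 2
    · positivity
  exact lt_of_le_of_lt hup hlow
end
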